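/- Let (M, g, ∇, ∇*) be a statistical manifold α-conformal to a Riemannian manifold (M, h, ∇°). Then (M, g, ∇, ∇*) is conjugate symmetric if and only if it is conjugate Ricci-symmetric. -/

import Mathlib

/-!
For an `α`-conformal statistical manifold the cubic form `Q = ∇g` equals `α · (dφ ⊙ g)`.
For any dual pair, duality and the Ricci identity for `∇g` give
`g((R* - R)(X,Y)Z, W) = (∇_X Q)(Y,Z,W) - (∇_Y Q)(X,Z,W)`, and for `Q = a · (dφ ⊙ g)` this is a
Kulkarni–Nomizu-type product of `g` with an explicit 2-tensor `P`. Tracing it gives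
`Ric* - Ric = Pᵗ - (n + 1) P + (tr P) g`; so conjugate Ricci-symmetry forces `P` to be symmetric
with `n P = (tr P) g`, and the product of `g` with a multiple of `g` vanishes.
-/

/- Algebraic model of a manifold: `C` = smooth functions, `V` = vector fields,
`act` = directional derivative, `bracket` = Lie bracket, `g` = Riemannian metric. -/
structure SMData (C V : Type*) [CommRing C] [AddCommGroup V] [Module C V] where
  act : V → C → C
  bracket : V → V → V
  g : V → V → C
  g_symm : ∀ X Y, g X Y = g Y X
  g_addl : ∀ X Y Z, g (X + Y) Z = g X Z + g Y Z
  g_smul : ∀ (f : C) (X Y : V), g (f • X) Y = f * g X Y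
  act_add : ∀ (X : V) (f h : C), act X (f + h) = act X f + act X h
  act_mul : ∀ (X : V) (f h : C), act X (f * h) = act X f * h + f * act X h
  act_addl : ∀ (X Y : V) (f : C), act (X + Y) f = act X f + act Y f
  act_smull : ∀ (f : C) (X : V) (h : C), act (f • X) h = f * act X h
  bracket_act : ∀ X Y f, act (bracket X Y) f = act X (act Y f) - act Y (act X f)
  bracket_antisymm : ∀ X Y, bracket X Y = - bracket Y X

namespace SMData

variable {C V : Type*} [CommRing C] [AddCommGroup V] [Module C V] (D : SMData C V)

/-- Axioms for an affine connection. -/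
def IsConn (nab : V → V → V) : Prop :=
  (∀ X Y Z : V, nab (X + Y) Z = nab X Z + nab Y Z) ∧
  (∀ X Y Z : V, nab X (Y + Z) = nab X Y + nab X Z) ∧
  (∀ (f : C) (X Y : V), nab (f • X) Y = f • nab X Y) ∧
  (∀ (f : C) (X Y : V), nab X (f • Y) = f • nab X Y + D.act X f • Y)

def IsTorsionFree (nab : V → V → V) : Prop :=
  ∀ X Y, nab X Y - nab Y X = D.bracket X Y

/-- `(∇_X g)(Y,Z)`. -/
def nablag (nab : V → V → V) (X Y Z : V) : C :=
  D.act X (D.g Y Z) - D.g (nab X Y) Z - D.g Y (nab X Z)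

/-- Total symmetry of the cubic form `Q(X,Y,Z) = (∇_X g)(Y,Z)`. -/
def CubicSymm (nab : V → V → V) : Prop :=
  ∀ X Y Z, D.nablag nab X Y Z = D.nablag nab Y X Z

/-- `(M,g,∇)` is a statistical manifold. -/
def IsStatistical (nab : V → V → V) : Prop :=
  D.IsConn nab ∧ D.IsTorsionFree nab ∧ D.CubicSymm nab

/-- `∇*` is the dual (conjugate) connection of `∇` w.r.t. `g`. -/
def IsDual (nab nabs : V → V → V) : Prop :=
  ∀ X Y Z, D.act X (D.g Y Z) = D.g (nab X Y) Z + D.g Y (nabs X Z)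

/-- Curvature tensor `R(X,Y)Z` of a connection. -/
def curv (nab : V → V → V) (X Y Z : V) : V :=
  nab X (nab Y Z) - nab Y (nab X Z) - nab (D.bracket X Y) Z

/-- `(e, ε)` is a pair of `g`-dual frames spanning `V`. -/
def DualFrame {n : ℕ} (e ε : Fin n → V) : Prop :=
  (∀ i j, D.g (e i) (ε j) = if i = j then 1 else 0) ∧
  (∀ v : V, v = ∑ i, D.g v (ε i) • e i)

/-- Ricci tensor `Ric(Y,Z) = tr (X ↦ R(X,Y)Z)` computed in a dual frame. -/
def ric (nab : V → V → V) {n : ℕ} (e ε : Fin n → V) (Y Z : V) : C :=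
  ∑ i, D.g (D.curv nab (e i) Y Z) (ε i)

end SMData

/-- The `α`-connection `∇^{(α)} = ((1+α)/2)∇ + ((1-α)/2)∇*`. -/
noncomputable def aconn {V : Type*} [AddCommGroup V] [Module ℝ V]
    (α : ℝ) (nab nabs : V → V → V) : V → V → V :=
  fun X Y => ((1 + α) / 2 : ℝ) • nab X Y + ((1 - α) / 2 : ℝ) • nabs X Y

/-- `(M, g, ∇)` is `α`-conformal to `(M, h, ∇°)` via `φ`, where `E = e^φ`. -/
def AlphaConformal {C V : Type*} [CommRing C] [AddCommGroup V] [Module C V]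
    [Algebra ℝ C] [Module ℝ V] [IsScalarTower ℝ C V]
    (D : SMData C V) (h : V → V → C) (nab0 : V → V → V)
    (φ E : C) (gradφ : V) (α : ℝ) (nab : V → V → V) : Prop :=
  (∀ X Y, D.g X Y = E * h X Y) ∧
  (∀ X Y, nab X Y = nab0 X Y
      + ((1 - α) / 2 : ℝ) • (D.act X φ • Y + D.act Y φ • X)
      - ((1 + α) / 2 : ℝ) • (h X Y • gradφ))

namespace SMData

variable {C V : Type*} [CommRing C] [AddCommGroup V] [Module C V] (D : SMData C V)

lemma isLinearMap_g_left (Z : V) : IsLinearMap C (D.g · Z) :=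
  ⟨fun X Y => D.g_addl X Y Z, fun f X => D.g_smul f X Z⟩

lemma g_sum_left {ι : Type*} (s : Finset ι) (X : ι → V) (Z : V) :
    D.g (∑ i ∈ s, X i) Z = ∑ i ∈ s, D.g (X i) Z :=
  map_sum (IsLinearMap.mk' _ (D.isLinearMap_g_left Z)) X s

lemma g_add_right (X Y Z : V) : D.g X (Y + Z) = D.g X Y + D.g X Z := by
  rw [D.g_symm, D.g_addl, D.g_symm Y, D.g_symm Z]

lemma g_smul_right (f : C) (X Y : V) : D.g X (f • Y) = f * D.g X Y := by
  rw [D.g_symm, D.g_smul, D.g_symm]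

lemma g_sub_left (X Y Z : V) : D.g (X - Y) Z = D.g X Z - D.g Y Z :=
  map_sub (IsLinearMap.mk' _ (D.isLinearMap_g_left Z)) X Y

lemma g_sub_right (X Y Z : V) : D.g X (Y - Z) = D.g X Y - D.g X Z := by
  rw [D.g_symm, D.g_sub_left, D.g_symm Y, D.g_symm Z]

lemma act_sub_left (X Y : V) (f : C) : D.act (X - Y) f = D.act X f - D.act Y f := by
  rw [eq_sub_iff_add_eq, ← D.act_addl, sub_add_cancel]

lemma act_sub (X : V) (f f' : C) : D.act X (f - f') = D.act X f - D.act X f' := by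
  rw [eq_sub_iff_add_eq, ← D.act_add, sub_add_cancel]

namespace DualFrame

variable {D} {n : ℕ} {e ε : Fin n → V}

lemma sum_g_mul (hf : D.DualFrame e ε) {F : V → C} (hF : IsLinearMap C F) (v : V) :
    ∑ i, D.g v (ε i) * F (e i) = F v := by
  calc ∑ i, D.g v (ε i) * F (e i) = IsLinearMap.mk' F hF (∑ i, D.g v (ε i) • e i) := by
        simp [map_sum]
    _ = F v := by rw [← hf.2 v]; rfl

lemma sum_g_self (hf : D.DualFrame e ε) : ∑ i, D.g (e i) (ε i) = n := by
  simp [hf.1]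

lemma eq_zero (hf : D.DualFrame e ε) {v : V} (hv : ∀ i, D.g v (ε i) = 0) : v = 0 := by
  rw [hf.2 v]
  simp [hv]

/-- `w - ∑ g(w, eᵢ) εᵢ` is `g`-orthogonal to every `eⱼ`, hence to everything, hence zero. -/
lemma symm (hf : D.DualFrame e ε) : D.DualFrame ε e := by
  refine ⟨fun i j => by rw [D.g_symm, hf.1 j i]; exact if_congr eq_comm rfl rfl, fun w => ?_⟩
  set u := w - ∑ i, D.g w (e i) • ε i
  have hue : ∀ j, D.g u (e j) = 0 := fun j => by
    simp [u, D.g_sub_left, D.g_sum_left, D.g_smul, D.g_symm (ε _) (e j), hf.1]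
  have hu : ∀ v, D.g u v = 0 := fun v => by
    rw [hf.2 v, D.g_symm, D.g_sum_left]
    simp [D.g_smul, D.g_symm _ u, hue]
  exact (sub_eq_zero.1 (hf.eq_zero fun i => hu (ε i)))

end DualFrame

section Connection

variable {D} {nab nabs : V → V → V}

/-- `covNablag nab X Y Z W` is `(∇_X Q)(Y, Z, W)` for the cubic form `Q = D.nablag nab`. -/
def covNablag (nab : V → V → V) (X Y Z W : V) : C :=
  D.act X (D.nablag nab Y Z W) - D.nablag nab (nab X Y) Z W - D.nablag nab Y (nab X Z) W
    - D.nablag nab Y Z (nab X W)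

lemma act_g_eq_nablag_add (nab : V → V → V) (X Y Z : V) :
    D.act X (D.g Y Z) = D.nablag nab X Y Z + D.g (nab X Y) Z + D.g Y (nab X Z) := by
  rw [nablag]; ring

lemma IsDual.g_curv (hd : D.IsDual nab nabs) (X Y Z W : V) :
    D.g (D.curv nabs X Y Z) W = - D.g Z (D.curv nab X Y W) := by
  have hd' : ∀ X Y Z, D.g (nabs X Y) Z = D.act X (D.g Y Z) - D.g Y (nab X Z) := fun X Y Z => by
    rw [D.g_symm Y Z, hd, D.g_symm, D.g_symm (nab X Z)]; ring
  simp only [curv, D.g_sub_left, D.g_sub_right, hd', D.act_sub, D.bracket_act]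
  ring

/-- The Ricci identity for the covariant derivative of the metric. -/
lemma covNablag_sub_covNablag (hc : D.IsConn nab) (htf : D.IsTorsionFree nab) (X Y Z W : V) :
    D.covNablag nab X Y Z W - D.covNablag nab Y X Z W
      = -(D.g (D.curv nab X Y Z) W + D.g Z (D.curv nab X Y W)) := by
  have hsub : ∀ X Y Z, nab (X - Y) Z = nab X Z - nab Y Z := fun X Y Z => by
    rw [eq_sub_iff_add_eq, ← hc.1, sub_add_cancel]
  have hact : ∀ f, D.act X (D.act Y f) - D.act Y (D.act X f)
      = D.act (nab X Y) f - D.act (nab Y X) f := fun f => by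
    rw [← D.bracket_act, ← htf, D.act_sub_left]
  have hQ : ∀ X Y, D.act X (D.nablag nab Y Z W) = D.act X (D.act Y (D.g Z W))
      - D.nablag nab X (nab Y Z) W - D.g (nab X (nab Y Z)) W - D.g (nab Y Z) (nab X W)
      - D.nablag nab X Z (nab Y W) - D.g (nab X Z) (nab Y W) - D.g Z (nab X (nab Y W)) :=
    fun X Y => by
      rw [nablag, D.act_sub, D.act_sub, D.act_g_eq_nablag_add nab X (nab Y Z),
        D.act_g_eq_nablag_add nab X Z]
      ring
  simp only [covNablag, hQ, curv, ← htf X Y, hsub, D.g_sub_left, D.g_sub_right]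
  simp only [nablag]
  linear_combination hact (D.g Z W)

lemma IsDual.g_curv_sub_curv (hd : D.IsDual nab nabs) (hc : D.IsConn nab)
    (htf : D.IsTorsionFree nab) (X Y Z W : V) :
    D.g (D.curv nabs X Y Z - D.curv nab X Y Z) W
      = D.covNablag nab X Y Z W - D.covNablag nab Y X Z W := by
  rw [covNablag_sub_covNablag hc htf, D.g_sub_left, hd.g_curv, D.g_symm (D.curv nab X Y Z)]
  ring

end Connection

section ConformalCubic

variable {D}

def hess (nab : V → V → V) (φ : C) (X Y : V) : C :=
  D.act X (D.act Y φ) - D.act (nab X Y) φ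

/-- `symCubic φ` is the symmetrisation `dφ ⊙ g` of `dφ ⊗ g`. -/
def symCubic (φ : C) (X Y Z : V) : C :=
  D.act X φ * D.g Y Z + D.act Y φ * D.g X Z + D.act Z φ * D.g X Y

/-- The tensor `P` with `g((R* - R)(X,Y)Z, W) = kulkarniSym P X Y Z W` when `Q = a · dφ ⊙ g`. -/
def curvDiffTensor (nab : V → V → V) (a φ : C) (X Y : V) : C :=
  D.act X a * D.act Y φ + a * (D.hess nab φ X Y - a * (D.act X φ * D.act Y φ))

def kulkarniSym (P : V → V → C) (X Y Z W : V) : C :=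
  P X Z * D.g Y W + P X W * D.g Y Z - P Y Z * D.g X W - P Y W * D.g X Z
    + (P X Y - P Y X) * D.g Z W

variable {nab : V → V → V}

lemma covNablag_sub_covNablag_of_nablag_eq {a φ : C}
    (hQ : ∀ X Y Z, D.nablag nab X Y Z = a * D.symCubic φ X Y Z) (X Y Z W : V) :
    D.covNablag nab X Y Z W - D.covNablag nab Y X Z W
      = D.kulkarniSym (D.curvDiffTensor nab a φ) X Y Z W := by
  have hact : ∀ X Y Z, D.act X (D.g Y Z)
      = a * D.symCubic φ X Y Z + D.g (nab X Y) Z + D.g Y (nab X Z) := fun X Y Z => by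
    rw [D.act_g_eq_nablag_add nab, hQ]
  simp only [covNablag, hQ, D.act_mul, symCubic, D.act_add, hact]
  simp only [kulkarniSym, curvDiffTensor, hess, D.g_symm Y X]
  ring

lemma isLinearMap_hess_left (hc : D.IsConn nab) (φ : C) (Y : V) :
    IsLinearMap C (D.hess nab φ · Y) := by
  refine ⟨fun X X' => ?_, fun f X => ?_⟩
  · simp only [hess, D.act_addl, hc.1]
    ring
  · simp only [hess, D.act_smull, hc.2.2.1, smul_eq_mul]
    ring

lemma isLinearMap_hess_right (hc : D.IsConn nab) (φ : C) (X : V) :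
    IsLinearMap C (D.hess nab φ X) := by
  refine ⟨fun Y Y' => ?_, fun f Y => ?_⟩
  · simp only [hess, D.act_addl, D.act_add, hc.2.1]
    ring
  · simp only [hess, D.act_smull, D.act_mul, hc.2.2.2, D.act_addl, smul_eq_mul]
    ring

lemma isLinearMap_curvDiffTensor_left (hc : D.IsConn nab) (a φ : C) (Y : V) :
    IsLinearMap C (D.curvDiffTensor nab a φ · Y) := by
  have hH := isLinearMap_hess_left hc φ Y
  refine ⟨fun X X' => ?_, fun f X => ?_⟩
  · simp only [curvDiffTensor, D.act_addl, hH.map_add]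
    ring
  · simp only [curvDiffTensor, D.act_smull, hH.map_smul, smul_eq_mul]
    ring

lemma isLinearMap_curvDiffTensor_right (hc : D.IsConn nab) (a φ : C) (X : V) :
    IsLinearMap C (D.curvDiffTensor nab a φ X) := by
  have hH := isLinearMap_hess_right hc φ X
  refine ⟨fun Y Y' => ?_, fun f Y => ?_⟩
  · simp only [curvDiffTensor, D.act_addl, hH.map_add]
    ring
  · simp only [curvDiffTensor, D.act_smull, hH.map_smul, smul_eq_mul]
    ring

lemma DualFrame.sum_kulkarniSym {n : ℕ} {e ε : Fin n → V} (hf : D.DualFrame e ε)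
    {P : V → V → C} (hP₁ : ∀ Y, IsLinearMap C (P · Y)) (hP₂ : ∀ X, IsLinearMap C (P X))
    (Y Z : V) :
    ∑ i, D.kulkarniSym P (e i) Y Z (ε i)
      = P Z Y - ((n : C) + 1) * P Y Z + (∑ i, P (e i) (ε i)) * D.g Y Z := by
  have h₁ : ∑ i, P (e i) Z * D.g Y (ε i) = P Y Z := by
    simpa only [mul_comm] using hf.sum_g_mul (hP₁ Z) Y
  have h₂ : ∑ i, P Y (ε i) * D.g (e i) Z = P Y Z := by
    simpa only [mul_comm, D.g_symm Z] using hf.symm.sum_g_mul (hP₂ Y) Z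
  have h₃ : ∑ i, P (e i) Y * D.g Z (ε i) = P Z Y := by
    simpa only [mul_comm] using hf.sum_g_mul (hP₁ Y) Z
  have h₄ : ∑ i, P Y (e i) * D.g Z (ε i) = P Y Z := by
    simpa only [mul_comm] using hf.sum_g_mul (hP₂ Y) Z
  simp only [kulkarniSym, sub_mul, Finset.sum_add_distrib, Finset.sum_sub_distrib,
    ← Finset.sum_mul, ← Finset.mul_sum, hf.sum_g_self, h₁, h₂, h₃, h₄]
  ring

lemma mul_kulkarniSym_eq_zero {P : V → V → C} {c t : C} (hP : ∀ X Y, c * P X Y = t * D.g X Y)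
    (X Y Z W : V) : c * D.kulkarniSym P X Y Z W = 0 := by
  simp only [kulkarniSym]
  linear_combination D.g Y W * hP X Z + D.g Y Z * hP X W - D.g X W * hP Y Z - D.g X Z * hP Y W
    + D.g Z W * hP X Y - D.g Z W * hP Y X + t * D.g Z W * D.g_symm X Y

lemma natCast_mul_eq_mul_g {n : ℕ} {P : V → V → C} {t : C} (hn : IsUnit ((n : C) + 2))
    (hP : ∀ Y Z, P Z Y - ((n : C) + 1) * P Y Z + t * D.g Y Z = 0) (Y Z : V) :
    (n : C) * P Y Z = t * D.g Y Z := by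
  have hsymm : P Z Y = P Y Z := by
    refine sub_eq_zero.1 (hn.mul_right_eq_zero.1 ?_)
    linear_combination hP Y Z - hP Z Y + t * D.g_symm Z Y
  linear_combination -hP Y Z + hsymm

end ConformalCubic

section Main

variable {D} {nab nabs : V → V → V} {a φ : C}

lemma IsDual.g_curv_sub_curv_of_nablag_eq (hd : D.IsDual nab nabs) (hc : D.IsConn nab)
    (htf : D.IsTorsionFree nab) (hQ : ∀ X Y Z, D.nablag nab X Y Z = a * D.symCubic φ X Y Z)
    (X Y Z W : V) :
    D.g (D.curv nabs X Y Z - D.curv nab X Y Z) W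
      = D.kulkarniSym (D.curvDiffTensor nab a φ) X Y Z W := by
  rw [hd.g_curv_sub_curv hc htf, covNablag_sub_covNablag_of_nablag_eq hQ]

lemma IsDual.ric_sub_ric_of_nablag_eq (hd : D.IsDual nab nabs) (hc : D.IsConn nab)
    (htf : D.IsTorsionFree nab) (hQ : ∀ X Y Z, D.nablag nab X Y Z = a * D.symCubic φ X Y Z)
    {n : ℕ} {e ε : Fin n → V} (hf : D.DualFrame e ε) (Y Z : V) :
    D.ric nabs e ε Y Z - D.ric nab e ε Y Z
      = D.curvDiffTensor nab a φ Z Y - ((n : C) + 1) * D.curvDiffTensor nab a φ Y Z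
        + (∑ i, D.curvDiffTensor nab a φ (e i) (ε i)) * D.g Y Z := by
  simp only [ric, ← Finset.sum_sub_distrib, ← D.g_sub_left,
    hd.g_curv_sub_curv_of_nablag_eq hc htf hQ]
  exact hf.sum_kulkarniSym (isLinearMap_curvDiffTensor_left hc a φ)
    (isLinearMap_curvDiffTensor_right hc a φ) Y Z

theorem IsDual.curv_eq_iff_ric_eq_of_nablag_eq [Algebra ℚ C] (hd : D.IsDual nab nabs)
    (hc : D.IsConn nab) (htf : D.IsTorsionFree nab)
    (hQ : ∀ X Y Z, D.nablag nab X Y Z = a * D.symCubic φ X Y Z)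
    {n : ℕ} {e ε : Fin n → V} (hf : D.DualFrame e ε) :
    (∀ X Y Z, D.curv nab X Y Z = D.curv nabs X Y Z)
      ↔ (∀ Y Z, D.ric nab e ε Y Z = D.ric nabs e ε Y Z) := by
  have hunit : ∀ k : ℕ, k ≠ 0 → IsUnit (k : C) := fun k hk => by
    simpa using (IsUnit.mk0 (k : ℚ) (Nat.cast_ne_zero.2 hk)).map (algebraMap ℚ C)
  refine ⟨fun h Y Z => by simp only [ric, h], fun h X Y Z => ?_⟩
  have hnP := D.natCast_mul_eq_mul_g (by exact_mod_cast hunit (n + 2) (by omega))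
    fun Y Z => by rw [← hd.ric_sub_ric_of_nablag_eq hc htf hQ hf, h, sub_self]
  refine (sub_eq_zero.1 (hf.eq_zero fun i => ?_)).symm
  rw [hd.g_curv_sub_curv_of_nablag_eq hc htf hQ]
  exact (hunit n (Fin.pos i).ne').mul_right_eq_zero.1 (D.mul_kulkarniSym_eq_zero hnP ..)

end Main

end SMData

lemma nablag_eq_of_alphaConformal {C V : Type*} [CommRing C] [AddCommGroup V] [Module C V]
    [Algebra ℝ C] [Module ℝ V] [IsScalarTower ℝ C V] {D : SMData C V} {h : V → V → C}
    {nab0 nab : V → V → V} {φ E : C} {gradφ : V} {α : ℝ}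
    (hconf : AlphaConformal D h nab0 φ E gradφ α nab)
    (hmet0 : ∀ X Y Z : V, D.act X (h Y Z) = h (nab0 X Y) Z + h Y (nab0 X Z))
    (hgrad : ∀ X : V, h gradφ X = D.act X φ) (hE : ∀ X : V, D.act X E = D.act X φ * E)
    (X Y Z : V) :
    D.nablag nab X Y Z = algebraMap ℝ C α * D.symCubic φ X Y Z := by
  obtain ⟨hg, hnab⟩ := hconf
  have hreal : ∀ (r : ℝ) (v : V), r • v = algebraMap ℝ C r • v := fun r v =>
    (algebraMap_smul C r v).symm
  have hα₁ : algebraMap ℝ C α = 1 - 2 * algebraMap ℝ C ((1 - α) / 2) := by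
    rw [← map_ofNat (algebraMap ℝ C) 2, ← map_mul, ← map_one (algebraMap ℝ C), ← map_sub]
    congr 1; ring
  have hα₂ : algebraMap ℝ C ((1 + α) / 2) = 1 - algebraMap ℝ C ((1 - α) / 2) := by
    rw [← map_one (algebraMap ℝ C), ← map_sub]
    congr 1; ring
  simp only [SMData.nablag, SMData.symCubic, hnab, hreal, D.g_addl, D.g_sub_left, D.g_add_right,
    D.g_sub_right, D.g_smul, D.g_smul_right, D.g_symm Y gradφ, D.g_symm Y X]
  simp only [hg, D.act_mul, hE, hmet0, hgrad]
  rw [hα₁, hα₂]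
  ring

theorem stmt15_general {C V : Type*} [CommRing C] [AddCommGroup V] [Module C V]
    (D : SMData C V) [Algebra ℝ C] [Module ℝ V] [IsScalarTower ℝ C V]
    (nab nabs : V → V → V)
    (hs : D.IsStatistical nab)
    (hd : D.IsDual nab nabs)
    (h : V → V → C) (nab0 : V → V → V) (φ E : C) (gradφ : V) (α : ℝ)
    (hmet0 : ∀ X Y Z : V, D.act X (h Y Z) = h (nab0 X Y) Z + h Y (nab0 X Z))
    (hgrad : ∀ X : V, h gradφ X = D.act X φ)
    (hE : ∀ X : V, D.act X E = D.act X φ * E)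
    (hconf : AlphaConformal D h nab0 φ E gradφ α nab)
    {n : ℕ} (e ε : Fin n → V) (hf : D.DualFrame e ε) :
    (∀ X Y Z : V, D.curv nab X Y Z = D.curv nabs X Y Z)
      ↔ (∀ Y Z : V, D.ric nab e ε Y Z = D.ric nabs e ε Y Z) := by
  let _ : Algebra ℚ C := Algebra.compHom C (algebraMap ℚ ℝ)
  exact hd.curv_eq_iff_ric_eq_of_nablag_eq hs.1 hs.2.1
    (nablag_eq_of_alphaConformal hconf hmet0 hgrad hE) hf

theorem stmt15 {C V : Type*} [CommRing C] [AddCommGroup V] [Module C V]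
    (D : SMData C V) [Algebra ℝ C] [Module ℝ V] [IsScalarTower ℝ C V]
    (nab nabs : V → V → V)
    (hs : D.IsStatistical nab) (hsc : D.IsConn nabs) (htfs : D.IsTorsionFree nabs)
    (hd : D.IsDual nab nabs)
    (h : V → V → C) (nab0 : V → V → V) (φ E : C) (gradφ : V) (α : ℝ)
    (hhsymm : ∀ X Y, h X Y = h Y X)
    (hhaddl : ∀ X Y Z, h (X + Y) Z = h X Z + h Y Z)
    (hhsmul : ∀ (f : C) (X Y : V), h (f • X) Y = f * h X Y)
    (hc0 : D.IsConn nab0) (htf0 : D.IsTorsionFree nab0)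
    (hmet0 : ∀ X Y Z : V, D.act X (h Y Z) = h (nab0 X Y) Z + h Y (nab0 X Z))
    (hgrad : ∀ X : V, h gradφ X = D.act X φ)
    (hEunit : IsUnit E) (hE : ∀ X : V, D.act X E = D.act X φ * E)
    (hconf : AlphaConformal D h nab0 φ E gradφ α nab)
    {n : ℕ} (e ε : Fin n → V) (hf : D.DualFrame e ε) :
    (∀ X Y Z : V, D.curv nab X Y Z = D.curv nabs X Y Z)
      ↔ (∀ Y Z : V, D.ric nab e ε Y Z = D.ric nabs e ε Y Z) :=
  stmt15_general D nab nabs hs hd h nab0 φ E gradφ α hmet0 hgrad hE hconf e ε hf
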